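/- Let Φ : ℤ → ℂ^{1×J} be deterministic with Σ_{k∈ℤ}‖Φ(k)‖(ρ^{-k}+ϑ^{-k}) < ∞ for some ϑ < √ρ, let i ∈ {1,2}, x_i := Σ_{k∈ℤ} Φ(k) π⁽ⁱ⁾ A_i^{-k}, and define Ψ_i(k) := (Φ(k) − 1_{k=0} x_i) π⁽ⁱ⁾. Then there is a constant C such that |E[Z_n^{Ψ_i}]| ≤ C (ρ^n ∧ ϑ^n) for all n ∈ ℤ; in particular the expectation of Z_n^{Ψ_i} = Z_n^{Φπ⁽ⁱ⁾} − x_i π⁽ⁱ⁾ Z_n is O(ϑ^n) as n → ∞. -/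

import Mathlib

/-!
Put `A_i = Aπ + (1 - π)` and `M k = π A_i ^ k` for `k ∈ ℤ`. Since `π` is an idempotent commuting
with `A` and `0` is not among the eigenvalues it selects, `A_i` is invertible,
`M a * M b = M (a + b)` and `π A ^ m = M m`. Both tails of `M` are controlled:
`‖M m‖ = O(ρ ^ m)` by the positive Perron eigenvector, and `‖M (-m)‖ = O(ϑ ^ (-m))` by Gelfand's
formula, because the eigenvalues of `π A_i⁻¹` are inverses of eigenvalues of modulus `≥ √ρ > ϑ`.

With `e n k = (Φ k - 1_{k=0} x_i) M (n - k) Z_0` the expectation is `∑_{k ≤ n} e n k`, and `x_i`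
is precisely the value for which `∑_{k ∈ ℤ} e n k = 0`. For `n < 0` the sum over `k ≤ n` is
`O(ρ ^ n)`; for `n ≥ 0` it equals minus the sum over `k > n`, which is `O(ϑ ^ n)`.
-/

open Filter

noncomputable section

/-- Euclidean (Hilbert–Schmidt) norm of a row vector. -/
def frobV {J : ℕ} (v : Fin J → ℂ) : ℝ := Real.sqrt (∑ j, ‖v j‖ ^ 2)

/-- integer powers of a square complex matrix (via `Matrix.inv` for negative exponents). -/
def zpowM {J : ℕ} (M : Matrix (Fin J) (Fin J) ℂ) (k : ℤ) : Matrix (Fin J) (Fin J) ℂ :=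
  if 0 ≤ k then M ^ k.toNat else M⁻¹ ^ (-k).toNat

/-- `x` is a generalized eigenvector of `M` for `lam` (or zero). -/
def IsGenEig {J : ℕ} (M : Matrix (Fin J) (Fin J) ℂ) (lam : ℂ) (x : Fin J → ℂ) : Prop :=
  ((lam • (1 : Matrix (Fin J) (Fin J) ℂ) - M) ^ J).mulVec x = 0

/-- `P` is the spectral projection of `M` onto the generalized eigenspaces of the
eigenvalues satisfying `pred`, along the remaining generalized eigenspaces. -/
def IsSpecProj {J : ℕ} (M P : Matrix (Fin J) (Fin J) ℂ) (pred : ℂ → Prop) : Prop :=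
  ∀ lam x, IsGenEig M lam x → (pred lam → P.mulVec x = x) ∧ (¬ pred lam → P.mulVec x = 0)

attribute [local instance] Matrix.frobeniusNormedAddCommGroup Matrix.frobeniusNormedRing
  Matrix.frobeniusNormedAlgebra

open Matrix

variable {J : ℕ}

lemma frobV_nonneg (v : Fin J → ℂ) : 0 ≤ frobV v := Real.sqrt_nonneg _

lemma frobV_eq_norm_toLp (v : Fin J → ℂ) : frobV v = ‖WithLp.toLp 2 v‖ := by
  rw [EuclideanSpace.norm_eq]
  rfl

lemma norm_le_frobV (v : Fin J → ℂ) : ‖v‖ ≤ frobV v := by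
  rw [frobV_eq_norm_toLp]
  exact (pi_norm_le_iff_of_nonneg (norm_nonneg _)).2 fun j =>
    PiLp.norm_apply_le (WithLp.toLp 2 v) j

lemma norm_dotProduct_le_frobV (v w : Fin J → ℂ) : ‖v ⬝ᵥ w‖ ≤ frobV v * frobV w := by
  have hstar : frobV (star w) = frobV w := by simp [frobV]
  calc ‖v ⬝ᵥ w‖ = ‖inner ℂ (WithLp.toLp 2 (star w)) (WithLp.toLp 2 v)‖ := by
        rw [EuclideanSpace.inner_toLp_toLp, star_star]
    _ ≤ frobV (star w) * frobV v := by
        rw [frobV_eq_norm_toLp, frobV_eq_norm_toLp]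
        exact norm_inner_le_norm _ _
    _ = frobV v * frobV w := by rw [hstar, mul_comm]

lemma frobV_mulVec_le (M : Matrix (Fin J) (Fin J) ℂ) (w : Fin J → ℂ) :
    frobV (M *ᵥ w) ≤ ‖M‖ * frobV w := by
  simpa only [frobV_eq_norm_toLp, ← frobenius_norm_replicateCol (ι := Unit), replicateCol_mulVec]
    using frobenius_norm_mul M (replicateCol Unit w)

lemma frobV_vecMul_le (v : Fin J → ℂ) (M : Matrix (Fin J) (Fin J) ℂ) :
    frobV (v ᵥ* M) ≤ frobV v * ‖M‖ := by
  rw [← mulVec_transpose, ← frobenius_norm_transpose M, mul_comm]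
  exact frobV_mulVec_le _ _

lemma norm_dotProduct_mulVec_le (v : Fin J → ℂ) (M : Matrix (Fin J) (Fin J) ℂ)
    (w : Fin J → ℂ) : ‖v ⬝ᵥ (M *ᵥ w)‖ ≤ frobV v * ‖M‖ * frobV w :=
  (norm_dotProduct_le_frobV _ _).trans <| by
    rw [mul_assoc]
    gcongr
    · exact frobV_nonneg v
    · exact frobV_mulVec_le M w

lemma zpowM_eq_zpow (M : Matrix (Fin J) (Fin J) ℂ) (k : ℤ) : zpowM M k = M ^ k := by
  unfold zpowM
  split_ifs with hk
  · rw [← zpow_natCast, Int.toNat_of_nonneg hk]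
  · rw [inv_pow', ← zpow_neg_natCast, Int.toNat_of_nonneg (by omega), neg_neg]

lemma le_mul_zpow_add_zpow {f : ℤ → ℝ} {C ρ ϑ : ℝ} (hC : 0 ≤ C) (hρ : 0 < ρ) (hϑ : 0 < ϑ)
    (hnat : ∀ m : ℕ, f m ≤ C * ρ ^ m) (hneg : ∀ m : ℕ, f (-m) ≤ C * ϑ⁻¹ ^ m) (k : ℤ) :
    f k ≤ C * (ρ ^ k + ϑ ^ k) := by
  obtain ⟨m, rfl | rfl⟩ := Int.eq_nat_or_neg k
  · refine (hnat m).trans ?_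
    rw [zpow_natCast, zpow_natCast]
    gcongr
    apply le_add_of_nonneg_right
    positivity
  · refine (hneg m).trans ?_
    rw [_root_.zpow_neg, zpow_natCast, _root_.zpow_neg, zpow_natCast, inv_pow ϑ]
    gcongr
    apply le_add_of_nonneg_left
    positivity

section Weights

variable {ρ ϑ : ℝ}

lemma zpow_le_zpow_left_of_nonpos (hϑ : 0 < ϑ) (hϑρ : ϑ ≤ ρ) {n : ℤ} (hn : n ≤ 0) :
    ρ ^ n ≤ ϑ ^ n :=
  calc ρ ^ n = (ρ ^ (-n))⁻¹ := by rw [_root_.zpow_neg, inv_inv]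
    _ ≤ (ϑ ^ (-n))⁻¹ := inv_anti₀ (by positivity) (zpow_le_zpow_left₀ (by omega) hϑ.le hϑρ)
    _ = ϑ ^ n := by rw [_root_.zpow_neg, inv_inv]

lemma zpow_sub_add_zpow_sub_le_of_le (hϑ : 0 < ϑ) (hϑρ : ϑ ≤ ρ) {n k : ℤ} (hkn : k ≤ n) :
    ρ ^ (n - k) + ϑ ^ (n - k) ≤ 2 * ρ ^ n * (ρ ^ (-k) + ϑ ^ (-k)) := by
  have hρ := hϑ.trans_le hϑρ
  have hle : ϑ ^ (n - k) ≤ ρ ^ (n - k) := zpow_le_zpow_left₀ (by omega) hϑ.le hϑρ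
  have hsplit : ρ ^ (n - k) = ρ ^ n * ρ ^ (-k) := by rw [sub_eq_add_neg, zpow_add₀ hρ.ne']
  nlinarith [mul_pos (zpow_pos hρ n) (zpow_pos hϑ (-k))]

lemma zpow_sub_add_zpow_sub_le_of_lt (hϑ : 0 < ϑ) (hϑρ : ϑ ≤ ρ) {n k : ℤ} (hnk : n < k) :
    ρ ^ (n - k) + ϑ ^ (n - k) ≤ 2 * ϑ ^ n * (ρ ^ (-k) + ϑ ^ (-k)) := by
  have hρ := hϑ.trans_le hϑρ
  have hle : ρ ^ (n - k) ≤ ϑ ^ (n - k) := zpow_le_zpow_left_of_nonpos hϑ hϑρ (by omega)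
  have hsplit : ϑ ^ (n - k) = ϑ ^ n * ϑ ^ (-k) := by rw [sub_eq_add_neg, zpow_add₀ hϑ.ne']
  nlinarith [mul_pos (zpow_pos hϑ n) (zpow_pos hρ (-k))]

end Weights

lemma exists_norm_pow_le_of_spectralRadius_lt {A : Type*} [NormedRing A] [NormedAlgebra ℂ A]
    [CompleteSpace A] (a : A) {r : ℝ} (hr : 0 < r) (ha : spectralRadius ℂ a < ENNReal.ofReal r) :
    ∃ C, 0 ≤ C ∧ ∀ m : ℕ, ‖a ^ m‖ ≤ C * r ^ m := by
  have hev : ∀ᶠ m : ℕ in atTop, ‖a ^ m‖ ≤ r ^ m := by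
    filter_upwards [(spectrum.pow_norm_pow_one_div_tendsto_nhds_spectralRadius a)
      |>.eventually_lt_const ha, eventually_gt_atTop 0] with m hm hm0
    rw [ENNReal.ofReal_lt_ofReal_iff hr, one_div, Real.rpow_inv_lt_iff_of_pos (norm_nonneg _) hr.le
      (by positivity), Real.rpow_natCast] at hm
    exact hm.le
  have hO : (fun m : ℕ => a ^ m) =O[atTop] fun m => r ^ m :=
    Asymptotics.IsBigO.of_bound 1 <| by
      filter_upwards [hev] with m hm
      rwa [one_mul, Real.norm_of_nonneg (by positivity)]
  obtain ⟨C, hC⟩ :=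
    (Asymptotics.isBigO_nat_atTop_iff fun m hm => absurd hm (pow_ne_zero m hr.ne')).1 hO
  refine ⟨max C 0, le_max_right _ _, fun m => (hC m).trans ?_⟩
  rw [Real.norm_of_nonneg (by positivity)]
  gcongr
  exact le_max_left _ _

lemma pow_mulVec_of_mulVec_eq_smul {R n : Type*} [CommSemiring R] [Fintype n] [DecidableEq n]
    {A : Matrix n n R} {ρ : R} {u : n → R} (h : A *ᵥ u = ρ • u) (m : ℕ) :
    (A ^ m) *ᵥ u = ρ ^ m • u := by
  induction m with
  | zero => simp
  | succ m ih => rw [pow_succ', ← mulVec_mulVec, ih, mulVec_smul, h, smul_smul, ← pow_succ]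

lemma frobenius_norm_le_of_norm_apply_le {m n α : Type*} [Fintype m] [Fintype n]
    [NormedAddCommGroup α] {M N : Matrix m n α} (h : ∀ i j, ‖M i j‖ ≤ ‖N i j‖) :
    ‖M‖ ≤ ‖N‖ := by
  rw [frobenius_norm_def, frobenius_norm_def]
  gcongr with i _ j _
  exact h i j

section PerronBound

variable {A : Matrix (Fin J) (Fin J) ℝ} {ρ : ℝ} {u : Fin J → ℝ}

lemma pow_apply_le_of_mulVec_eq_smul (hA : ∀ i j, 0 ≤ A i j) (hu : ∀ j, 0 < u j)
    (h : A *ᵥ u = ρ • u) (m : ℕ) (i j : Fin J) : (A ^ m) i j ≤ ρ ^ m * (u i / u j) := by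
  rw [mul_div_assoc', le_div_iff₀ (hu j)]
  calc (A ^ m) i j * u j ≤ ∑ l, (A ^ m) i l * u l :=
        Finset.single_le_sum (f := fun l => (A ^ m) i l * u l)
          (fun l _ => mul_nonneg (pow_apply_nonneg hA m i l) (hu l).le) (Finset.mem_univ j)
    _ = ρ ^ m * u i := congrFun (pow_mulVec_of_mulVec_eq_smul h m) i

lemma exists_norm_pow_le_of_pos_eigenvector (hA : ∀ i j, 0 ≤ A i j) (hu : ∀ j, 0 < u j)
    (h : A *ᵥ u = ρ • u) (hρ : 0 ≤ ρ) : ∃ C, 0 ≤ C ∧ ∀ m : ℕ, ‖A ^ m‖ ≤ C * ρ ^ m := by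
  set D : Matrix (Fin J) (Fin J) ℝ := of fun i j => u i / u j
  refine ⟨‖D‖, norm_nonneg _, fun m => ?_⟩
  calc ‖A ^ m‖ ≤ ‖ρ ^ m • D‖ := frobenius_norm_le_of_norm_apply_le fun i j => by
        have := hu i; have := hu j
        change ‖(A ^ m) i j‖ ≤ ‖ρ ^ m * (u i / u j)‖
        rw [Real.norm_of_nonneg (pow_apply_nonneg hA m i j), Real.norm_of_nonneg (by positivity)]
        exact pow_apply_le_of_mulVec_eq_smul hA hu h m i j
    _ ≤ ‖ρ ^ m‖ * ‖D‖ := norm_smul_le _ _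
    _ = ‖D‖ * ρ ^ m := by rw [Real.norm_of_nonneg (pow_nonneg hρ m), mul_comm]

lemma map_ofReal_pow (A : Matrix (Fin J) (Fin J) ℝ) (m : ℕ) :
    A.map (fun a => (a : ℂ)) ^ m = (A ^ m).map (fun a => (a : ℂ)) :=
  (map_pow Complex.ofRealHom.mapMatrix A m).symm

lemma exists_norm_map_ofReal_pow_le (hA : ∀ i j, 0 ≤ A i j) (hu : ∀ j, 0 < u j)
    (h : A *ᵥ u = ρ • u) (hρ : 0 ≤ ρ) :
    ∃ C, 0 ≤ C ∧ ∀ m : ℕ, ‖A.map (fun a => (a : ℂ)) ^ m‖ ≤ C * ρ ^ m := by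
  obtain ⟨C, hC, hpow⟩ := exists_norm_pow_le_of_pos_eigenvector hA hu h hρ
  refine ⟨C, hC, fun m => ?_⟩
  rw [map_ofReal_pow, frobenius_norm_map_eq _ _ fun a => Complex.norm_real a]
  exact hpow m

end PerronBound

lemma exists_mulVec_eq_smul_of_mem_spectrum {K n : Type*} [Field K] [Fintype n] [DecidableEq n]
    {B : Matrix n n K} {z : K} (hz : z ∈ spectrum K B) : ∃ v ≠ 0, B *ᵥ v = z • v := by
  rw [← spectrum_toLin', ← Module.End.hasEigenvalue_iff_mem_spectrum] at hz
  obtain ⟨v, hv⟩ := hz.exists_hasEigenvector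
  exact ⟨v, hv.2, by simpa only [toLin'_apply] using hv.apply_eq_smul⟩

lemma IsIdempotentElem.mul_mul_pow {M : Type*} [Monoid M] {p a : M} (hp : IsIdempotentElem p)
    (hpa : Commute p a) (m : ℕ) : p * (p * a) ^ m = p * a ^ m := by
  rw [hpa.mul_pow, ← mul_assoc, ← pow_succ', hp.pow_succ_eq]

namespace IsGenEig

variable {M : Matrix (Fin J) (Fin J) ℂ} {μ : ℂ} {x : Fin J → ℂ}

lemma of_mulVec_eq_smul (h : M *ᵥ x = μ • x) : IsGenEig M μ x := by
  cases J with
  | zero => exact Subsingleton.elim _ _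
  | succ J =>
    rw [IsGenEig, pow_succ, ← mulVec_mulVec, sub_mulVec, smul_mulVec, one_mulVec, h, sub_self,
      mulVec_zero]

lemma mulVec_self (hx : IsGenEig M μ x) : IsGenEig M μ (M *ᵥ x) := by
  have hcomm : Commute ((μ • 1 - M) ^ J) M :=
    (((Commute.one_left M).smul_left μ).sub_left (Commute.refl M)).pow_left J
  rw [IsGenEig, mulVec_mulVec, hcomm.eq, ← mulVec_mulVec, hx, mulVec_zero]

lemma of_mem_maxGenEigenspace (hx : x ∈ Module.End.maxGenEigenspace (toLinAlgEquiv' M) μ) :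
    IsGenEig M μ x := by
  rw [Module.End.maxGenEigenspace_eq_genEigenspace_finrank, Module.End.mem_genEigenspace_nat,
    Module.finrank_fin_fun, LinearMap.mem_ker] at hx
  have hneg : toLinAlgEquiv' ((μ • 1 - M) ^ J) = (-1) ^ J * (toLinAlgEquiv' M - μ • 1) ^ J := by
    rw [map_pow, map_sub, map_smul, map_one, ← neg_sub]
    exact neg_pow (toLinAlgEquiv' M - μ • 1 : Module.End ℂ (Fin J → ℂ)) J
  change toLinAlgEquiv' ((μ • 1 - M) ^ J) x = 0
  rw [hneg, Module.End.mul_apply, hx, map_zero]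

end IsGenEig

lemma ext_of_isGenEig (M : Matrix (Fin J) (Fin J) ℂ) {P Q : Matrix (Fin J) (Fin J) ℂ}
    (h : ∀ μ x, IsGenEig M μ x → P *ᵥ x = Q *ᵥ x) : P = Q := by
  refine ext_iff_mulVec.2 fun x => ?_
  have hx : x ∈ ⨆ μ, Module.End.maxGenEigenspace (toLinAlgEquiv' M) μ := by
    rw [Module.End.iSup_maxGenEigenspace_eq_top]
    trivial
  refine Submodule.iSup_induction (motive := fun y => P *ᵥ y = Q *ᵥ y) _ hx
    (fun μ y hy => h μ y (IsGenEig.of_mem_maxGenEigenspace hy)) (by simp) fun y z hy hz => ?_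
  rw [mulVec_add, mulVec_add, hy, hz]

namespace IsSpecProj

variable {M P : Matrix (Fin J) (Fin J) ℂ} {pred : ℂ → Prop}

lemma isIdempotentElem (h : IsSpecProj M P pred) : IsIdempotentElem P := by
  refine ext_of_isGenEig M fun μ x hx => ?_
  rw [← mulVec_mulVec]
  by_cases hp : pred μ
  · rw [(h μ x hx).1 hp, (h μ x hx).1 hp]
  · rw [(h μ x hx).2 hp, mulVec_zero]

lemma commute (h : IsSpecProj M P pred) : Commute P M := by
  refine ext_of_isGenEig M fun μ x hx => ?_
  rw [← mulVec_mulVec, ← mulVec_mulVec]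
  by_cases hp : pred μ
  · rw [(h μ x hx).1 hp, (h μ _ hx.mulVec_self).1 hp]
  · rw [(h μ x hx).2 hp, (h μ _ hx.mulVec_self).2 hp, mulVec_zero]

lemma commute_mul_add_one_sub (h : IsSpecProj M P pred) : Commute P (M * P + (1 - P)) :=
  (h.commute.mul_right (Commute.refl P)).add_right
    ((Commute.one_right P).sub_right (Commute.refl P))

lemma mul_mul_add_one_sub (h : IsSpecProj M P pred) : P * (M * P + (1 - P)) = P * M := by
  rw [mul_add, mul_sub, mul_one, h.isIdempotentElem.eq, sub_self, add_zero, ← mul_assoc,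
    h.commute.eq, mul_assoc, h.isIdempotentElem.eq]

lemma mul_add_one_sub_mulVec {v : Fin J → ℂ} (hv : P *ᵥ v = v) :
    (M * P + (1 - P)) *ᵥ v = M *ᵥ v := by
  rw [add_mulVec, sub_mulVec, one_mulVec, ← mulVec_mulVec, hv, sub_self, add_zero]

lemma isUnit_det_mul_add_one_sub (h : IsSpecProj M P pred) (h0 : ¬ pred 0) :
    IsUnit (M * P + (1 - P)).det := by
  rw [isUnit_iff_ne_zero]
  intro hdet
  obtain ⟨v, hv0, hv⟩ := exists_mulVec_eq_zero_iff.2 hdet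
  have hMPv : M *ᵥ (P *ᵥ v) = (0 : ℂ) • (P *ᵥ v) := by
    rw [zero_smul, mulVec_mulVec, ← h.commute.eq, ← h.mul_mul_add_one_sub, ← mulVec_mulVec, hv,
      mulVec_zero]
  have hPv : P *ᵥ v = 0 := by
    rw [← (h 0 _ (IsGenEig.of_mulVec_eq_smul hMPv)).2 h0, mulVec_mulVec, h.isIdempotentElem.eq]
  rw [add_mulVec, sub_mulVec, one_mulVec, ← mulVec_mulVec, hPv, mulVec_zero, sub_zero,
    zero_add] at hv
  exact hv0 hv

lemma spectralRadius_mul_inv_le (h : IsSpecProj M P pred) {s : ℝ} (hs : 0 < s)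
    (hpred : ∀ μ, pred μ → s ≤ ‖μ‖) :
    spectralRadius ℂ (P * (M * P + (1 - P))⁻¹) ≤ ENNReal.ofReal s⁻¹ := by
  set AP := M * P + (1 - P)
  have hunit : IsUnit AP.det :=
    h.isUnit_det_mul_add_one_sub fun h0 => by simpa using (hpred 0 h0).trans_lt' hs
  refine iSup₂_le fun z hz => ?_
  rw [← enorm_eq_nnnorm, ← ofReal_norm]
  refine ENNReal.ofReal_le_ofReal ?_
  rcases eq_or_ne z 0 with rfl | hz0
  · rw [norm_zero]
    positivity
  obtain ⟨v, hv0, hv⟩ := exists_mulVec_eq_smul_of_mem_spectrum hz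
  have hPv : P *ᵥ v = v := by
    have hPB : P *ᵥ ((P * AP⁻¹) *ᵥ v) = (P * AP⁻¹) *ᵥ v := by
      rw [mulVec_mulVec, ← mul_assoc, h.isIdempotentElem.eq]
    rw [hv, mulVec_smul] at hPB
    exact smul_right_injective _ hz0 hPB
  have hMv : M *ᵥ v = z⁻¹ • v := by
    have hAPB : AP *ᵥ ((P * AP⁻¹) *ᵥ v) = v := by
      rw [mulVec_mulVec, ← mul_assoc, ← h.commute_mul_add_one_sub.eq, mul_assoc,
        mul_nonsing_inv _ hunit, mul_one, hPv]
    rw [hv, mulVec_smul, mul_add_one_sub_mulVec hPv] at hAPB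
    conv_rhs => rw [← hAPB, smul_smul, inv_mul_cancel₀ hz0, one_smul]
  have hpz : pred z⁻¹ := by
    by_contra hp
    exact hv0 (hPv ▸ (h _ v (IsGenEig.of_mulVec_eq_smul hMv)).2 hp)
  have hs' := hpred _ hpz
  rw [norm_inv] at hs'
  exact (le_inv_comm₀ hs (norm_pos_iff.2 hz0)).1 hs'

lemma mul_pow_mul_add_one_sub (h : IsSpecProj M P pred) (m : ℕ) :
    P * (M * P + (1 - P)) ^ m = P * M ^ m := by
  rw [← h.isIdempotentElem.mul_mul_pow h.commute_mul_add_one_sub, h.mul_mul_add_one_sub,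
    h.isIdempotentElem.mul_mul_pow h.commute]

lemma mul_zpow_mul_mul_zpow (h : IsSpecProj M P pred) (h0 : ¬ pred 0) (a b : ℤ) :
    P * (M * P + (1 - P)) ^ a * (P * (M * P + (1 - P)) ^ b) =
      P * (M * P + (1 - P)) ^ (a + b) := by
  rw [mul_assoc, ← mul_assoc (_ ^ a),
    ← (Matrix.Commute.zpow_right h.commute_mul_add_one_sub a).eq, mul_assoc, ← mul_assoc P P,
    h.isIdempotentElem.eq, ← Matrix.zpow_add (h.isUnit_det_mul_add_one_sub h0)]

lemma exists_norm_mul_zpow_le (h : IsSpecProj M P pred) {ρ ϑ s CA : ℝ} (hρ : 0 < ρ)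
    (hϑ : 0 < ϑ) (hϑs : ϑ < s) (hpred : ∀ μ, pred μ → s ≤ ‖μ‖) (hCA : 0 ≤ CA)
    (hM : ∀ m : ℕ, ‖M ^ m‖ ≤ CA * ρ ^ m) :
    ∃ C, ∀ k : ℤ, ‖P * (M * P + (1 - P)) ^ k‖ ≤ C * (ρ ^ k + ϑ ^ k) := by
  set AP := M * P + (1 - P)
  have hPinv : Commute P AP⁻¹ := by
    simpa only [Matrix.zpow_neg_one] using
      Matrix.Commute.zpow_right h.commute_mul_add_one_sub (-1)
  have hρB : spectralRadius ℂ (P * AP⁻¹) < ENNReal.ofReal ϑ⁻¹ :=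
    (h.spectralRadius_mul_inv_le (hϑ.trans hϑs) hpred).trans_lt
      ((ENNReal.ofReal_lt_ofReal_iff (by positivity)).2 (inv_strictAnti₀ hϑ hϑs))
  obtain ⟨CB, hCB, hB⟩ := exists_norm_pow_le_of_spectralRadius_lt _ (inv_pos.2 hϑ) hρB
  refine ⟨‖P‖ * (CA + CB), le_mul_zpow_add_zpow (by positivity) hρ hϑ (fun m => ?_) fun m => ?_⟩
  · rw [zpow_natCast, h.mul_pow_mul_add_one_sub, mul_assoc]
    refine (norm_mul_le _ _).trans (by gcongr; exact (hM m).trans (by gcongr; linarith))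
  · rw [zpow_neg_natCast, ← inv_pow', ← h.isIdempotentElem.mul_mul_pow hPinv, mul_assoc]
    refine (norm_mul_le _ _).trans (by gcongr; exact (hB m).trans (by gcongr; linarith))

end IsSpecProj

lemma tsum_nat_sub_eq_tsum_indicator_Iic {α : Type*} [AddCommMonoid α] [TopologicalSpace α]
    (f : ℤ → α) (n : ℤ) : ∑' m : ℕ, f (n - m) = ∑' k, (Set.Iic n).indicator f k := by
  have hinj : Function.Injective fun m : ℕ => n - m := fun a b hab => by simpa using hab
  rw [← hinj.tsum_eq]
  · exact tsum_congr fun m => (Set.indicator_of_mem (by simp) f).symm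
  · intro k hk
    have hkn : k ∈ Set.Iic n := Set.mem_of_indicator_ne_zero (Function.mem_support.1 hk)
    rw [Set.mem_Iic] at hkn
    exact ⟨(n - k).toNat, by simp only; omega⟩

lemma tsum_indicator_Iic_eq_neg {α : Type*} [NormedAddCommGroup α] [CompleteSpace α] {f : ℤ → α}
    (hf : HasSum f 0) (n : ℤ) :
    ∑' k, (Set.Iic n).indicator f k = -∑' k, (Set.Ioi n).indicator f k := by
  rw [eq_neg_iff_add_eq_zero, ← (hf.summable.indicator _).tsum_add (hf.summable.indicator _),
    ← Set.compl_Iic]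
  simp_rw [Set.indicator_self_add_compl_apply]
  exact hf.tsum_eq

lemma norm_tsum_indicator_le {α : Type*} [NormedAddCommGroup α] {f : ℤ → α} {g : ℤ → ℝ} {G c : ℝ}
    (hg : HasSum g G) (hg0 : ∀ k, 0 ≤ g k) (hc : 0 ≤ c) {s : Set ℤ}
    (hf : ∀ k ∈ s, ‖f k‖ ≤ c * g k) : ‖∑' k, s.indicator f k‖ ≤ c * G := by
  refine tsum_of_norm_bounded (hg.mul_left c) fun k => ?_
  by_cases hk : k ∈ s
  · rw [Set.indicator_of_mem hk]
    exact hf k hk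
  · rw [Set.indicator_of_notMem hk, norm_zero]
    exact mul_nonneg hc (hg0 k)

lemma HasSum.dotProduct_right {ι α n : Type*} [NonUnitalNonAssocSemiring α] [TopologicalSpace α]
    [IsTopologicalSemiring α] [Fintype n] {f : ι → n → α} {a : n → α} (hf : HasSum f a)
    (y : n → α) : HasSum (fun i => f i ⬝ᵥ y) (a ⬝ᵥ y) :=
  hasSum_sum fun j _ => (Pi.hasSum.1 hf j).mul_right (y j)

section PowerFamily

variable {M : ℤ → Matrix (Fin J) (Fin J) ℂ} {C ρ ϑ : ℝ} {Φ : ℤ → Fin J → ℂ}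

lemma norm_dotProduct_mulVec_sub_le (hMle : ∀ k, ‖M k‖ ≤ C * (ρ ^ k + ϑ ^ k)) (z : Fin J → ℂ)
    (n k : ℤ) : ‖Φ k ⬝ᵥ (M (n - k) *ᵥ z)‖ ≤
      C * frobV z * (frobV (Φ k) * (ρ ^ (n - k) + ϑ ^ (n - k))) := by
  refine (norm_dotProduct_mulVec_le _ _ _).trans ?_
  calc frobV (Φ k) * ‖M (n - k)‖ * frobV z
      ≤ frobV (Φ k) * (C * (ρ ^ (n - k) + ϑ ^ (n - k))) * frobV z := by
        gcongr
        · exact Real.sqrt_nonneg _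
        · exact Real.sqrt_nonneg _
        · exact hMle _
    _ = _ := by ring

lemma hasSum_dotProduct_mulVec_sub (hM : ∀ a b, M a * M b = M (a + b))
    (hMle : ∀ k, ‖M k‖ ≤ C * (ρ ^ k + ϑ ^ k))
    (hΦ : Summable fun k => frobV (Φ k) * (ρ ^ (-k) + ϑ ^ (-k))) (z : Fin J → ℂ) (n : ℤ) :
    HasSum (fun k => Φ k ⬝ᵥ (M (n - k) *ᵥ z)) ((∑' k, Φ k ᵥ* M (-k)) ⬝ᵥ (M n *ᵥ z)) := by
  have hsum : Summable fun k => Φ k ᵥ* M (-k) := by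
    refine Summable.of_norm_bounded (hΦ.mul_left C) fun k => ?_
    refine (norm_le_frobV _).trans ((frobV_vecMul_le _ _).trans ?_)
    calc frobV (Φ k) * ‖M (-k)‖ ≤ frobV (Φ k) * (C * (ρ ^ (-k) + ϑ ^ (-k))) := by
          gcongr
          · exact Real.sqrt_nonneg _
          · exact hMle _
      _ = _ := by ring
  simpa only [dotProduct_mulVec, vecMul_vecMul, hM, neg_add_eq_sub] using
    hsum.hasSum.dotProduct_right (M n *ᵥ z)

lemma hasSum_sub_ite_dotProduct_mulVec_sub (hM : ∀ a b, M a * M b = M (a + b))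
    (hMle : ∀ k, ‖M k‖ ≤ C * (ρ ^ k + ϑ ^ k))
    (hΦ : Summable fun k => frobV (Φ k) * (ρ ^ (-k) + ϑ ^ (-k))) (z : Fin J → ℂ) (n : ℤ) :
    HasSum (fun k => (Φ k - if k = 0 then ∑' k, Φ k ᵥ* M (-k) else 0) ⬝ᵥ (M (n - k) *ᵥ z)) 0 := by
  set xi := ∑' k, Φ k ᵥ* M (-k)
  have h := (hasSum_dotProduct_mulVec_sub hM hMle hΦ z n).sub
    (hasSum_ite_eq (0 : ℤ) (xi ⬝ᵥ (M n *ᵥ z)))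
  rw [sub_self] at h
  have hsplit : (fun k => (Φ k - if k = 0 then xi else 0) ⬝ᵥ (M (n - k) *ᵥ z)) =
      fun k => Φ k ⬝ᵥ (M (n - k) *ᵥ z) - if k = 0 then xi ⬝ᵥ (M n *ᵥ z) else 0 := by
    funext k
    split_ifs with hk
    · simp [hk, sub_dotProduct]
    · simp
  rw [hsplit]
  exact h

theorem exists_norm_tsum_dotProduct_le_min (hM : ∀ a b, M a * M b = M (a + b))
    (hMle : ∀ k, ‖M k‖ ≤ C * (ρ ^ k + ϑ ^ k)) (hϑ : 0 < ϑ) (hϑρ : ϑ ≤ ρ)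
    (hΦ : Summable fun k => frobV (Φ k) * (ρ ^ (-k) + ϑ ^ (-k))) (z : Fin J → ℂ) :
    ∃ D, ∀ n : ℤ, ‖∑' m : ℕ, (Φ (n - m) - if n - m = 0 then ∑' k, Φ k ᵥ* M (-k) else 0) ⬝ᵥ
      (M m *ᵥ z)‖ ≤ D * min (ρ ^ n) (ϑ ^ n) := by
  set xi := ∑' k, Φ k ᵥ* M (-k)
  set g := fun k : ℤ => frobV (Φ k) * (ρ ^ (-k) + ϑ ^ (-k))
  set e : ℤ → ℤ → ℂ := fun n k => (Φ k - if k = 0 then xi else 0) ⬝ᵥ (M (n - k) *ᵥ z)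
  have hρ := hϑ.trans_le hϑρ
  have hC : 0 ≤ C := by
    have h0 := hMle 0
    simp only [zpow_zero] at h0
    linarith [norm_nonneg (M 0)]
  have hg0 : ∀ k, 0 ≤ g k := fun k => mul_nonneg (frobV_nonneg _) (by positivity)
  have hCz : 0 ≤ C * frobV z := mul_nonneg hC (frobV_nonneg z)
  have he_le : ∀ n k c, k ≠ 0 → ρ ^ (n - k) + ϑ ^ (n - k) ≤ c * (ρ ^ (-k) + ϑ ^ (-k)) →
      ‖e n k‖ ≤ c * (C * frobV z) * g k := by
    intro n k c hk hw
    calc ‖e n k‖ ≤ C * frobV z * (frobV (Φ k) * (ρ ^ (n - k) + ϑ ^ (n - k))) := by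
          simpa [e, hk] using norm_dotProduct_mulVec_sub_le hMle z n k
      _ ≤ C * frobV z * (frobV (Φ k) * (c * (ρ ^ (-k) + ϑ ^ (-k)))) := by
          gcongr
          exact frobV_nonneg _
      _ = c * (C * frobV z) * g k := by ring
  refine ⟨2 * (C * frobV z) * ∑' k, g k, fun n => ?_⟩
  rw [show ∑' m : ℕ, (Φ (n - m) - if n - m = 0 then xi else 0) ⬝ᵥ (M m *ᵥ z) =
      ∑' m : ℕ, e n (n - m) by simp only [e, sub_sub_cancel], tsum_nat_sub_eq_tsum_indicator_Iic]
  rcases lt_or_ge n 0 with hn | hn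
  · rw [min_eq_left (zpow_le_zpow_left_of_nonpos hϑ hϑρ hn.le)]
    calc _ ≤ 2 * ρ ^ n * (C * frobV z) * ∑' k, g k :=
          norm_tsum_indicator_le (s := Set.Iic n) hΦ.hasSum hg0 (by positivity) fun k hk =>
            he_le n k _ (by rw [Set.mem_Iic] at hk; omega)
              (zpow_sub_add_zpow_sub_le_of_le hϑ hϑρ hk)
      _ = _ := by ring
  · rw [min_eq_right (zpow_le_zpow_left₀ hn hϑ.le hϑρ),
      tsum_indicator_Iic_eq_neg (hasSum_sub_ite_dotProduct_mulVec_sub hM hMle hΦ z n), norm_neg]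
    calc _ ≤ 2 * ϑ ^ n * (C * frobV z) * ∑' k, g k :=
          norm_tsum_indicator_le (s := Set.Ioi n) hΦ.hasSum hg0 (by positivity) fun k hk =>
            he_le n k _ (by rw [Set.mem_Ioi] at hk; omega)
              (zpow_sub_add_zpow_sub_le_of_lt hϑ hϑρ hk)
      _ = _ := by ring

end PowerFamily

lemma sum_vecMul_mul_ofReal_pow_mulVec (w : Fin J → ℂ) (P : Matrix (Fin J) (Fin J) ℂ)
    (A : Matrix (Fin J) (Fin J) ℝ) (z : Fin J → ℝ) (m : ℕ) :
    ∑ j, (w ᵥ* P) j * (((A ^ m) *ᵥ z) j : ℂ) =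
      w ⬝ᵥ ((P * A.map (fun a => (a : ℂ)) ^ m) *ᵥ fun j => (z j : ℂ)) := by
  have hcast : (A.map (fun a => (a : ℂ)) ^ m *ᵥ fun j => (z j : ℂ)) =
      fun j => (((A ^ m) *ᵥ z) j : ℂ) := by
    funext j
    rw [map_ofReal_pow]
    exact (RingHom.map_mulVec Complex.ofRealHom _ _ j).symm
  rw [← mulVec_mulVec, dotProduct_mulVec, hcast]
  rfl

theorem expectation_difference_bound_general
    {J : ℕ} (A : Matrix (Fin J) (Fin J) ℝ) (ρ ϑ : ℝ) (uvec : Fin J → ℝ)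
    (hAnn : ∀ i j, 0 ≤ A i j)
    (hρ : 1 < ρ)
    (hu : ∀ j, 0 < uvec j)
    (heig : A.mulVec uvec = ρ • uvec)
    (hϑpos : 0 < ϑ) (hϑ : ϑ < Real.sqrt ρ)
    (Φ : ℤ → Fin J → ℂ)
    (hΦ : Summable fun k : ℤ => frobV (Φ k) * (ρ ^ (-k) + ϑ ^ (-k)))
    (Ac π AP : Matrix (Fin J) (Fin J) ℂ)
    (hAc : Ac = A.map (fun a => (a : ℂ)))
    (hcase : IsSpecProj Ac π (fun z => Real.sqrt ρ < ‖z‖) ∨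
      IsSpecProj Ac π (fun z => ‖z‖ = Real.sqrt ρ))
    (hAP : AP = Ac * π + (1 - π))
    (xi : Fin J → ℂ)
    (hxi : xi = ∑' k : ℤ, Matrix.vecMul (Matrix.vecMul (Φ k) π) (zpowM AP (-k)))
    (Ψ : ℤ → Fin J → ℂ)
    (hΨ : ∀ k, Ψ k = Matrix.vecMul (fun j => Φ k j - if k = 0 then xi j else 0) π)
    (Z0 : Fin J → ℝ)
    (EZ : ℤ → ℂ)
    (hEZ : ∀ n, EZ n = ∑' m : ℕ,
      ∑ j, Ψ (n - m) j * (((A ^ m).mulVec Z0 j : ℝ) : ℂ)) :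
    ∃ C : ℝ, ∀ n : ℤ, ‖EZ n‖ ≤ C * min (ρ ^ n) (ϑ ^ n) := by
  subst hAc hAP
  obtain ⟨pred, hπ, hpred⟩ :
      ∃ pred : ℂ → Prop, IsSpecProj _ π pred ∧ ∀ μ, pred μ → Real.sqrt ρ ≤ ‖μ‖ := by
    rcases hcase with h | h
    · exact ⟨_, h, fun μ hμ => hμ.le⟩
    · exact ⟨_, h, fun μ hμ => hμ.ge⟩
  have hρ0 : 0 < ρ := by linarith
  have hpred0 : ¬ pred 0 := fun h0 => by
    simpa using (hpred 0 h0).trans_lt' (Real.sqrt_pos.2 hρ0)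
  obtain ⟨CA, hCA, hApow⟩ := exists_norm_map_ofReal_pow_le hAnn hu heig hρ0.le
  obtain ⟨C, hC⟩ := hπ.exists_norm_mul_zpow_le hρ0 hϑpos hϑ hpred hCA hApow
  obtain ⟨D, hD⟩ := exists_norm_tsum_dotProduct_le_min (hπ.mul_zpow_mul_mul_zpow hpred0) hC
    hϑpos (hϑ.le.trans (Real.sqrt_le_self_iff.2 (Or.inr hρ.le))) hΦ fun j => (Z0 j : ℂ)
  refine ⟨D, fun n => le_of_eq_of_le ?_ (hD n)⟩
  simp only [hEZ, hΨ, hxi, sum_vecMul_mul_ofReal_pow_mulVec, ← hπ.mul_pow_mul_add_one_sub,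
    vecMul_vecMul, zpowM_eq_zpow, zpow_natCast, Pi.sub_def, ite_apply, Pi.zero_apply]

/-- for `i ∈ {1,2}`, `x_i := Σ_k Φ(k) π⁽ⁱ⁾ A_i^{-k}` and
`Ψ_i(k) := (Φ(k) − 1_{k=0} x_i) π⁽ⁱ⁾`, the expectation of the branching process counted
with `Ψ_i`, namely `E[Z_n^{Ψ_i}] = Σ_{k ≤ n} Ψ_i(k) A^{n-k} Z_0`, satisfies
`|E[Z_n^{Ψ_i}]| ≤ C (ρ^n ∧ ϑ^n)` for all `n ∈ ℤ`. -/
theorem expectation_difference_bound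
    {J : ℕ} (A : Matrix (Fin J) (Fin J) ℝ) (ρ ϑ : ℝ) (uvec : Fin J → ℝ)
    (hAnn : ∀ i j, 0 ≤ A i j)
    (hρ : 1 < ρ)
    (hposreg : ∃ n, ∀ i j, 0 < (A ^ n) i j)
    (hu : ∀ j, 0 < uvec j)
    (heig : A.mulVec uvec = ρ • uvec)
    (hϑpos : 0 < ϑ) (hϑ : ϑ < Real.sqrt ρ)
    (Φ : ℤ → Fin J → ℂ)
    (hΦ : Summable fun k : ℤ => frobV (Φ k) * (ρ ^ (-k) + ϑ ^ (-k)))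
    (Ac π AP : Matrix (Fin J) (Fin J) ℂ)
    (hAc : Ac = A.map (fun a => (a : ℂ)))
    (hcase : IsSpecProj Ac π (fun z => Real.sqrt ρ < ‖z‖) ∨
      IsSpecProj Ac π (fun z => ‖z‖ = Real.sqrt ρ))
    (hAP : AP = Ac * π + (1 - π))
    (xi : Fin J → ℂ)
    (hxi : xi = ∑' k : ℤ, Matrix.vecMul (Matrix.vecMul (Φ k) π) (zpowM AP (-k)))
    (Ψ : ℤ → Fin J → ℂ)
    (hΨ : ∀ k, Ψ k = Matrix.vecMul (fun j => Φ k j - if k = 0 then xi j else 0) π)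
    (Z0 : Fin J → ℝ) (hZ0 : ∀ j, 0 ≤ Z0 j)
    (EZ : ℤ → ℂ)
    (hEZ : ∀ n, EZ n = ∑' m : ℕ,
      ∑ j, Ψ (n - m) j * (((A ^ m).mulVec Z0 j : ℝ) : ℂ)) :
    ∃ C : ℝ, ∀ n : ℤ, ‖EZ n‖ ≤ C * min (ρ ^ n) (ϑ ^ n) :=
  expectation_difference_bound_general A ρ ϑ uvec hAnn hρ hu heig hϑpos hϑ Φ hΦ Ac π AP hAc hcase
    hAP xi hxi Ψ hΨ Z0 EZ hEZ
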